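/- arXiv:2212.01490 — 6 statements merged into one kernel-verified Lean document; each statement's English description precedes it below -/
import Mathlib

section
/- Let f : X → Y be θ-continuous between ideal topological spaces (X, τ_X, I_X) and (Y, τ_Y, I_Y), and suppose f⁻¹[I] ∈ I_X for every I ∈ I_Y. Then for every A ⊆ X, f[Γ(A)] ⊆ Γ(f[A]). -/
open Set Topology TopologicalSpace

/-- A set `U` is θ-open if every point of `U` has an open neighborhood whose
closure lies in `U`. -/
def ThetaOpen {X : Type*} [TopologicalSpace X] (U : Set X) : Prop :=
  ∀ x ∈ U, ∃ V : Set X, IsOpen V ∧ x ∈ V ∧ closure V ⊆ U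

/-- The topology of θ-open sets. -/
def thetaTopology (X : Type*) [TopologicalSpace X] : TopologicalSpace X :=
  TopologicalSpace.generateFrom {U : Set X | ThetaOpen U}

/-- θ-closure of a set. -/
def thetaCl {X : Type*} [TopologicalSpace X] (A : Set X) : Set X :=
  {x | ∀ U : Set X, IsOpen U → x ∈ U → (closure U ∩ A).Nonempty}

/-- An ideal of subsets of `X`. -/
structure SetIdeal (X : Type*) where
  sets : Set (Set X)
  empty_mem : ∅ ∈ sets
  subset_mem : ∀ {A B : Set X}, A ∈ sets → B ⊆ A → B ∈ sets
  union_mem : ∀ {A B : Set X}, A ∈ sets → B ∈ sets → A ∪ B ∈ sets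

/-- The local function `A*` in an ideal topological space. -/
def locFun {X : Type*} [TopologicalSpace X] (I : SetIdeal X) (A : Set X) : Set X :=
  {x | ∀ U : Set X, IsOpen U → x ∈ U → U ∩ A ∉ I.sets}

/-- The local closure function `Γ(A)` in an ideal topological space. -/
def locClFun {X : Type*} [TopologicalSpace X] (I : SetIdeal X) (A : Set X) : Set X :=
  {x | ∀ U : Set X, IsOpen U → x ∈ U → closure U ∩ A ∉ I.sets}

/-- `ψ_Γ(A) = X \ Γ(X \ A)`. -/
def psiGamma {X : Type*} [TopologicalSpace X] (I : SetIdeal X) (A : Set X) : Set X :=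
  (locClFun I Aᶜ)ᶜ

/-- The topology `σ` determined by `ψ_Γ`. -/
def sigmaTopology {X : Type*} [TopologicalSpace X] (I : SetIdeal X) : TopologicalSpace X :=
  TopologicalSpace.generateFrom {A : Set X | A ⊆ psiGamma I A}

/-- The topology `τ*` generated by the Kuratowski closure `Cl*(A) = A ∪ A*`. -/
def starTopology {X : Type*} [TopologicalSpace X] (I : SetIdeal X) : TopologicalSpace X :=
  TopologicalSpace.generateFrom {U : Set X | locFun I Uᶜ ⊆ Uᶜ}

/-- Transfinite iteration of the local closure function. -/
noncomputable def CLiter {X : Type*} [TopologicalSpace X] (I : SetIdeal X) (A : Set X)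
    (α : Ordinal) : Set X :=
  Ordinal.limitRecOn α A (fun _ S => S ∪ locClFun I S)
    (fun o _ ih => ⋃ (β : Ordinal) (h : β < o), ih β h)

/-- θ-continuity. -/
def ThetaContinuous {X Y : Type*} [TopologicalSpace X] [TopologicalSpace Y] (f : X → Y) : Prop :=
  ∀ x : X, ∀ V : Set Y, IsOpen V → f x ∈ V →
    ∃ U : Set X, IsOpen U ∧ x ∈ U ∧ f '' closure U ⊆ closure V

/-- Weak continuity. -/
def WeaklyContinuous {X Y : Type*} [TopologicalSpace X] [TopologicalSpace Y] (f : X → Y) : Prop :=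
  ∀ x : X, ∀ V : Set Y, IsOpen V → f x ∈ V →
    ∃ U : Set X, IsOpen U ∧ x ∈ U ∧ f '' U ⊆ closure V

/-- for θ-continuous `f` compatible with the ideals,
`f[Γ(A)] ⊆ Γ(f[A])`. -/
theorem stmt7 {X Y : Type*} [TopologicalSpace X] [TopologicalSpace Y]
    (IX : SetIdeal X) (IY : SetIdeal Y) (f : X → Y)
    (hf : ThetaContinuous f)
    (hI : ∀ I ∈ IY.sets, f ⁻¹' I ∈ IX.sets) :
    ∀ A : Set X, f '' locClFun IX A ⊆ locClFun IY (f '' A) := by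
  rintro A y ⟨x, hx, rfl⟩ V hV hxV hmem
  obtain ⟨U, hU, hxU, hsub⟩ := hf x V hV hxV
  refine hx U hU hxU (IX.subset_mem (hI _ hmem) ?_)
  rintro a ⟨haU, haA⟩
  exact ⟨hsub ⟨a, haU, rfl⟩, ⟨a, haA, rfl⟩⟩
end

section
/- Let f : X → Y be θ-continuous between ideal topological spaces with f⁻¹[I] ∈ I_X for every I ∈ I_Y. Then for every A ⊆ X, f[Cl_{σ_X}(A)] ⊆ Cl_{σ_Y}(f[A]); equivalently, f : (X, σ_X) → (Y, σ_Y) is continuous. -/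
open Set Topology TopologicalSpace

/-- a θ-continuous, ideal-compatible map is continuous for the
`σ`-topologies, equivalently `f[Cl_{σ_X}(A)] ⊆ Cl_{σ_Y}(f[A])`. -/
theorem stmt13 {X Y : Type*} [TopologicalSpace X] [TopologicalSpace Y]
    (IX : SetIdeal X) (IY : SetIdeal Y) (f : X → Y)
    (hf : ThetaContinuous f)
    (hI : ∀ I ∈ IY.sets, f ⁻¹' I ∈ IX.sets) :
    (∀ A : Set X,
      f '' (@closure X (sigmaTopology IX) A) ⊆ @closure Y (sigmaTopology IY) (f '' A)) ∧
    Continuous[sigmaTopology IX, sigmaTopology IY] f := by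
  have hcont : Continuous[sigmaTopology IX, sigmaTopology IY] f := by
    rw [show sigmaTopology IY = TopologicalSpace.generateFrom {A : Set Y | A ⊆ psiGamma IY A} from rfl,
      continuous_generateFrom_iff]
    intro V hV
    apply TopologicalSpace.isOpen_generateFrom_of_mem
    intro x hx
    have h := hV hx
    simp only [psiGamma, mem_compl_iff, locClFun, mem_setOf_eq] at h
    push_neg at h
    obtain ⟨W, hWo, hfxW, hWI⟩ := h
    simp only [psiGamma, mem_compl_iff, locClFun, mem_setOf_eq]
    push_neg
    obtain ⟨U, hUo, hxU, hU⟩ := hf x W hWo hfxW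
    refine ⟨U, hUo, hxU, ?_⟩
    refine IX.subset_mem (hI _ hWI) ?_
    intro z ⟨hz1, hz2⟩
    exact ⟨hU ⟨z, hz1, rfl⟩, hz2⟩
  refine ⟨fun A => ?_, hcont⟩
  exact @image_closure_subset_closure_image X Y (sigmaTopology IX) (sigmaTopology IY) f A hcont
end

section
/- If f : (X, τ_X) → (Y, τ_Y) is θ-continuous, then f : (X, (τ_θ)_X) → (Y, (τ_θ)_Y) is continuous, where τ_θ denotes the topology of θ-open sets. -/
open Set Topology TopologicalSpace

/-- a θ-continuous map is continuous for the θ-topologies. -/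
theorem stmt14 {X Y : Type*} [TopologicalSpace X] [TopologicalSpace Y]
    (f : X → Y) (hf : ThetaContinuous f) :
    Continuous[thetaTopology X, thetaTopology Y] f := by
  apply continuous_generateFrom_iff.mpr
  intro W hW
  have hpre : ThetaOpen (f ⁻¹' W) := by
    intro x hx
    obtain ⟨V, hVo, hxV, hVcl⟩ := hW (f x) hx
    obtain ⟨U, hUo, hxU, hU⟩ := hf x V hVo hxV
    exact ⟨U, hUo, hxU, fun y hy => hVcl (hU ⟨y, hy, rfl⟩)⟩
  exact TopologicalSpace.isOpen_generateFrom_of_mem hpre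
end

section
/- Let f : X → Y be weakly continuous between ideal topological spaces (X, τ_X, I_X), (Y, τ_Y, I_Y), with f⁻¹[I] ∈ I_X for every I ∈ I_Y. Then for every A ⊆ X, f[A*] ⊆ Γ(f[A]), where A* is the local function on X and Γ the local closure function on Y. -/
open Set Topology TopologicalSpace

/-- for weakly continuous `f` compatible with the ideals,
`f[A*] ⊆ Γ(f[A])`. -/
theorem stmt15 {X Y : Type*} [TopologicalSpace X] [TopologicalSpace Y]
    (IX : SetIdeal X) (IY : SetIdeal Y) (f : X → Y)
    (hf : WeaklyContinuous f)
    (hI : ∀ I ∈ IY.sets, f ⁻¹' I ∈ IX.sets) :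
    ∀ A : Set X, f '' locFun IX A ⊆ locClFun IY (f '' A) := by
  intro A y hy V hV hyV hmem
  obtain ⟨x, hx, rfl⟩ := hy
  obtain ⟨U, hU, hxU, hfU⟩ := hf x V hV hyV
  exact hx U hU hxU (IX.subset_mem (hI _ hmem)
    (fun z hz => ⟨hfU ⟨z, hz.1, rfl⟩, ⟨z, hz.2, rfl⟩⟩))
end

section
/- Let f : X → Y be weakly continuous between ideal topological spaces with f⁻¹[I] ∈ I_X for every I ∈ I_Y. Then f : (X, τ*_X) → (Y, σ_Y) is continuous, where τ* is the topology generated by the Kuratowski closure Cl*(A) = A ∪ A*, and σ is the topology whose closed sets are the F with Γ(F) ⊆ F. -/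
open Set Topology TopologicalSpace

/-- a weakly continuous, ideal-compatible map is continuous
from `(X, τ*_X)` to `(Y, σ_Y)`. -/
theorem stmt17 {X Y : Type*} [TopologicalSpace X] [TopologicalSpace Y]
    (IX : SetIdeal X) (IY : SetIdeal Y) (f : X → Y)
    (hf : WeaklyContinuous f)
    (hI : ∀ I ∈ IY.sets, f ⁻¹' I ∈ IX.sets) :
    Continuous[starTopology IX, sigmaTopology IY] f := by
  rw [sigmaTopology, continuous_generateFrom_iff]
  intro A hA
  apply TopologicalSpace.GenerateOpen.basic
  -- show locFun IX (f⁻¹A)ᶜ ⊆ (f⁻¹A)ᶜ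
  intro x hx
  simp only [mem_compl_iff, mem_preimage]
  intro hfx
  have hψ : f x ∈ psiGamma IY A := hA hfx
  simp only [psiGamma, mem_compl_iff, locClFun, mem_setOf_eq] at hψ
  push_neg at hψ
  obtain ⟨V, hV, hfxV, hVI⟩ := hψ
  obtain ⟨U, hU, hxU, hfU⟩ := hf x V hV hfxV
  refine hx U hU hxU (IX.subset_mem (hI _ hVI) ?_)
  rintro y ⟨hyU, hyA⟩
  exact ⟨hfU ⟨y, hyU, rfl⟩, hyA⟩
end

section
/- If f : (X, τ_X) → (Y, τ_Y) is weakly continuous and Y is finite, then f : (X, (τ_θ)_X) → (Y, (τ_θ)_Y) is continuous (f is τ_θ-continuous). -/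
/-! In a finite space every θ-open set is clopen, since a finite union of closures is closed. Weak
continuity makes preimages of clopen sets open, hence (applied to the complement) clopen, and a
clopen set is trivially θ-open. -/

open Set Topology TopologicalSpace

section

variable {X Y : Type*} [TopologicalSpace X] [TopologicalSpace Y]

theorem ThetaOpen.isOpen {V : Set Y} (hV : ThetaOpen V) : IsOpen V :=
  isOpen_iff_forall_mem_open.2 fun y hy =>
    let ⟨W, hW, hyW, hWV⟩ := hV y hy
    ⟨W, subset_closure.trans hWV, hW, hyW⟩

theorem ThetaOpen.isClosed_of_finite {V : Set Y} (hV : ThetaOpen V) (hfin : V.Finite) :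
    IsClosed V := by
  have := hfin.to_subtype
  choose W _ hyW hWV using fun y : V => hV y y.2
  have hV_sub : V ⊆ ⋃ y : V, W y := fun y hy => mem_iUnion.2 ⟨⟨y, hy⟩, hyW ⟨y, hy⟩⟩
  refine isClosed_of_closure_subset ?_
  calc closure V ⊆ closure (⋃ y : V, W y) := closure_mono hV_sub
    _ = ⋃ y : V, closure (W y) := closure_iUnion_of_finite W
    _ ⊆ V := iUnion_subset hWV

theorem IsClopen.thetaOpen {U : Set X} (hU : IsClopen U) : ThetaOpen U :=
  fun _ hx => ⟨U, hU.isOpen, hx, hU.isClosed.closure_subset⟩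

theorem WeaklyContinuous.isOpen_preimage_of_isClopen {f : X → Y} (hf : WeaklyContinuous f)
    {V : Set Y} (hV : IsClopen V) : IsOpen (f ⁻¹' V) :=
  isOpen_iff_forall_mem_open.2 fun x hx =>
    let ⟨U, hU, hxU, hUV⟩ := hf x V hV.isOpen hx
    ⟨U, fun _ hz => hV.isClosed.closure_subset (hUV (mem_image_of_mem f hz)), hU, hxU⟩

theorem WeaklyContinuous.isClopen_preimage {f : X → Y} (hf : WeaklyContinuous f)
    {V : Set Y} (hV : IsClopen V) : IsClopen (f ⁻¹' V) :=
  ⟨isOpen_compl_iff.1 (hf.isOpen_preimage_of_isClopen hV.compl),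
    hf.isOpen_preimage_of_isClopen hV⟩

end

/-- a weakly continuous map into a finite space is continuous for
the θ-topologies. -/
theorem stmt19 {X Y : Type*} [TopologicalSpace X] [TopologicalSpace Y]
    (f : X → Y) (hf : WeaklyContinuous f) [Finite Y] :
    Continuous[thetaTopology X, thetaTopology Y] f := by
  rw [thetaTopology, thetaTopology, continuous_generateFrom_iff]
  intro V hV
  have hV_clopen : IsClopen V := ⟨hV.isClosed_of_finite V.toFinite, hV.isOpen⟩
  exact .basic _ (hf.isClopen_preimage hV_clopen).thetaOpen
end
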